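/- The set of monomials {a^i b^j g^l : 0 ≤ i, j, l ≤ p−1} (images in H of the corresponding words in the free algebra) is a basis of H as a k-vector space; in particular H is finite dimensional over k with dim_k H = p³. -/

import Mathlib

noncomputable section

variable (k : Type*) [Field k]

/-- The generator `a` of the free algebra `k⟨a,b,g⟩`. -/
def aF : FreeAlgebra k (Fin 3) := FreeAlgebra.ι k 0

/-- The generator `b` of the free algebra `k⟨a,b,g⟩`. -/
def bF : FreeAlgebra k (Fin 3) := FreeAlgebra.ι k 1

/-- The generator `g` of the free algebra `k⟨a,b,g⟩`. -/
def gF : FreeAlgebra k (Fin 3) := FreeAlgebra.ι k 2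

/-- The defining relations `a^p = 0`, `b^p = 0`, `ba = ab + (1/2)a²`, `g^p = 1`,
`ga = ag`, `gb = bg − ag` of `H`. -/
inductive HRel (p : ℕ) : FreeAlgebra k (Fin 3) → FreeAlgebra k (Fin 3) → Prop
  | apow : HRel p (aF k ^ p) 0
  | bpow : HRel p (bF k ^ p) 0
  | rel : HRel p (bF k * aF k) (aF k * bF k + (2 : k)⁻¹ • aF k ^ 2)
  | gpow : HRel p (gF k ^ p) 1
  | ga : HRel p (gF k * aF k) (aF k * gF k)
  | gb : HRel p (gF k * bF k) (bF k * gF k - aF k * gF k)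

/-- The algebra `H = k⟨a,b,g⟩/(a^p, b^p, ba − ab − (1/2)a², g^p − 1, ga − ag, gb − bg + ag)`,
which is the smash product `A # kG`. -/
abbrev H (p : ℕ) := RingQuot (HRel k p)

/-- The image of `a` in `H`. -/
def aH (p : ℕ) : H k p := RingQuot.mkAlgHom k (HRel k p) (aF k)

/-- The image of `b` in `H`. -/
def bH (p : ℕ) : H k p := RingQuot.mkAlgHom k (HRel k p) (bF k)

/-- The image of `g` in `H`. -/
def gH (p : ℕ) : H k p := RingQuot.mkAlgHom k (HRel k p) (gF k)

/-!
The monomials span `H`: their span contains `1` and is stable under left multiplication by the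
generators, since `b a^i = a^i b + (i/2) a^(i+1)`, `g a = a g` and `g b^j = (b - a)^j g`; the
relations `a^p = 0`, `b^p = 0`, `g^p = 1` cut the exponents down to `0, …, p - 1`.

For independence, let `H` act on the functions `f : ℤ × ℤ × ZMod p → k`: `a` shifts `f` by
one step in `i`, `g` by one step in `l`, and `b` is the sum of a shift in `j` and a shift in `i`
weighted by `(i - 1)/2 + l`, which is what makes `ba - ab = a²/2` and `gb - bg = -ag` hold; the
shifts in `i` and `j` are cut off outside `0 < · < p`, and `b^p = 0` because its two summands
commute and `k` has characteristic `p`. Applied to the point mass at `0`, the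
monomial `a^i b^j g^l` gives a function equal to `1` at `(i, j, l)` and supported on points
`(i', j', l)` with `i' ≥ i` and `i' + j' = i + j`, so these images are triangular.
-/

section WeightedShift

variable {R X : Type*} [CommSemiring R] [AddCommGroup X]

def weightedShift (w : X → R) (e : X) : Module.End R (X → R) :=
  LinearMap.mulLeft R w ∘ₗ LinearMap.funLeft R R (· - e)

theorem weightedShift_apply (w : X → R) (e : X) (f : X → R) (x : X) :
    weightedShift w e f x = w x * f (x - e) := rfl

theorem weightedShift_pow_apply (w : X → R) (e : X) (n : ℕ) (f : X → R) (x : X) :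
    (weightedShift w e ^ n) f x =
      (∏ m ∈ Finset.range n, w (x - m • e)) * f (x - n • e) := by
  induction n generalizing x with
  | zero => simp
  | succ n ih =>
    rw [pow_succ', Module.End.mul_apply, weightedShift_apply, ih, Finset.prod_range_succ']
    simp only [succ_nsmul', sub_add_eq_sub_sub, zero_smul, sub_zero]
    ring

theorem weightedShift_pow_eq_zero {w : X → R} {e : X} (d : X →+ ℤ) (hd : d e = 1) {n : ℕ}
    (hn : 0 < n) (hw : ∀ x, ¬(0 < d x ∧ d x < n) → w x = 0) : weightedShift w e ^ n = 0 := by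
  ext f x
  rw [weightedShift_pow_apply, LinearMap.zero_apply, Pi.zero_apply]
  obtain ⟨m, hm, hwm⟩ : ∃ m ∈ Finset.range n, w (x - m • e) = 0 := by
    by_contra! h
    have hfirst := not_not.1 (mt (hw x) (by simpa using h 0 (by simpa using hn)))
    have hlast := not_not.1 (mt (hw _) (h (n - 1) (by simpa using hn)))
    simp only [map_sub, map_nsmul, hd, nsmul_eq_mul, mul_one] at hlast
    omega
  rw [Finset.prod_eq_zero hm hwm, zero_mul]

end WeightedShift

theorem linearIndependent_of_triangular {R ι X : Type*} [Ring R] [Fintype ι] {v : ι → X → R}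
    (pt : ι → X) (r : ι → ℕ) (hdiag : ∀ t, v t (pt t) = 1)
    (htri : ∀ s t, v s (pt t) ≠ 0 → s = t ∨ r s < r t) : LinearIndependent R v := by
  classical
  rw [Fintype.linearIndependent_iff]
  intro c hc t
  induction t using (measure r).wf.induction with
  | _ t ih =>
    have heval := congrFun hc (pt t)
    rw [Finset.sum_apply, Finset.sum_eq_single t, Pi.smul_apply, hdiag, smul_eq_mul, mul_one]
      at heval
    · exact heval
    · intro s _ hst
      rw [Pi.smul_apply, smul_eq_mul]
      by_cases hv : v s (pt t) = 0
      · rw [hv, mul_zero]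
      · rw [ih s ((htri s t hv).resolve_left hst), zero_mul]
    · simp

namespace Submodule

variable {R A : Type*} [CommSemiring R] [Semiring A] [Algebra R A]

theorem mul_mem_span_of_forall_mul_mem {t : Set A} {x : A}
    (h : ∀ y ∈ t, x * y ∈ Submodule.span R t) {m : A} (hm : m ∈ Submodule.span R t) :
    x * m ∈ Submodule.span R t :=
  (Submodule.span_le (p := (Submodule.span R t).comap (LinearMap.mulLeft R x))).2 h hm

theorem mul_mem_of_mem_adjoin {s : Set A} {M : Submodule R A}
    (h : ∀ x ∈ s, ∀ m ∈ M, x * m ∈ M) {y : A} (hy : y ∈ Algebra.adjoin R s) {m : A}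
    (hm : m ∈ M) : y * m ∈ M := by
  induction hy using Algebra.adjoin_induction generalizing m with
  | mem x hx => exact h x hx m hm
  | algebraMap r => exact Algebra.smul_def r m ▸ M.smul_mem r hm
  | add x y _ _ hx hy => exact (add_mul x y m).symm ▸ M.add_mem (hx hm) (hy hm)
  | mul x y _ _ hx hy => exact (mul_assoc x y m).symm ▸ hx (hy hm)

theorem eq_top_of_one_mem_of_mul_mem {s : Set A} (hs : Algebra.adjoin R s = ⊤)
    {M : Submodule R A} (h1 : 1 ∈ M) (h : ∀ x ∈ s, ∀ m ∈ M, x * m ∈ M) : M = ⊤ :=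
  eq_top_iff.2 fun y _ => mul_one y ▸ mul_mem_of_mem_adjoin h (hs ▸ Algebra.mem_top) h1

end Submodule

section Relations

variable {k} {p : ℕ}

theorem aH_pow_eq_zero : aH k p ^ p = 0 := by
  simpa [aH] using RingQuot.mkAlgHom_rel k (HRel.apow (k := k) (p := p))

theorem bH_pow_eq_zero : bH k p ^ p = 0 := by
  simpa [bH] using RingQuot.mkAlgHom_rel k (HRel.bpow (k := k) (p := p))

theorem gH_pow_eq_one : gH k p ^ p = 1 := by
  simpa [gH] using RingQuot.mkAlgHom_rel k (HRel.gpow (k := k) (p := p))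

theorem commute_gH_aH : Commute (gH k p) (aH k p) := by
  have h := RingQuot.mkAlgHom_rel k (HRel.ga (k := k) (p := p))
  simp only [map_mul] at h
  exact h

theorem bH_mul_aH : bH k p * aH k p = aH k p * bH k p + (2 : k)⁻¹ • aH k p ^ 2 := by
  simpa [aH, bH] using RingQuot.mkAlgHom_rel k (HRel.rel (k := k) (p := p))

theorem semiconjBy_gH_bH : SemiconjBy (gH k p) (bH k p) (bH k p - aH k p) := by
  have h := RingQuot.mkAlgHom_rel k (HRel.gb (k := k) (p := p))
  simp only [map_mul, map_sub] at h
  rw [SemiconjBy, sub_mul]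
  exact h

theorem adjoin_aH_bH_gH : Algebra.adjoin k {aH k p, bH k p, gH k p} = ⊤ := by
  have hgen : {aH k p, bH k p, gH k p} =
      RingQuot.mkAlgHom k (HRel k p) '' Set.range (FreeAlgebra.ι k) := by
    ext; simp [Fin.exists_fin_succ, aH, bH, gH, aF, bF, gF, eq_comm]
  rw [hgen, ← AlgHom.map_adjoin, FreeAlgebra.adjoin_range_ι, Algebra.map_top,
    AlgHom.range_eq_top]
  exact RingQuot.mkAlgHom_surjective k _

end Relations

def H.monomial (p i j l : ℕ) : H k p := aH k p ^ i * bH k p ^ j * gH k p ^ l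

namespace H

variable {k} {p : ℕ}

theorem aH_mul_monomial (i j l : ℕ) :
    aH k p * monomial k p i j l = monomial k p (i + 1) j l := by
  simp only [monomial, ← mul_assoc, ← pow_succ']

theorem bH_mul_aH_pow (i : ℕ) :
    bH k p * aH k p ^ i = aH k p ^ i * bH k p + ((i : k) * 2⁻¹) • aH k p ^ (i + 1) := by
  induction i with
  | zero => simp
  | succ i ih =>
    calc bH k p * aH k p ^ (i + 1) = (bH k p * aH k p ^ i) * aH k p := by
          rw [pow_succ, mul_assoc]
      _ = aH k p ^ i * (bH k p * aH k p) + ((i : k) * 2⁻¹) • aH k p ^ (i + 2) := by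
        rw [ih, add_mul, mul_assoc, smul_mul_assoc, ← pow_succ]
      _ = aH k p ^ (i + 1) * bH k p + (((i + 1 : ℕ) : k) * 2⁻¹) • aH k p ^ (i + 1 + 1) := by
        rw [bH_mul_aH, mul_add, ← mul_assoc, ← pow_succ, mul_smul_comm, ← pow_add, add_assoc,
          ← add_smul]
        push_cast
        ring_nf

theorem bH_mul_monomial (i j l : ℕ) :
    bH k p * monomial k p i j l =
      monomial k p i (j + 1) l + ((i : k) * 2⁻¹) • monomial k p (i + 1) j l := by
  simp only [monomial, mul_assoc, ← mul_assoc (bH k p), bH_mul_aH_pow, add_mul, smul_mul_assoc,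
    ← pow_succ']

theorem gH_mul_monomial (i j l : ℕ) :
    gH k p * monomial k p i j l =
      aH k p ^ i * (bH k p - aH k p) ^ j * monomial k p 0 0 (l + 1) := by
  simp only [monomial, pow_zero, one_mul, ← mul_assoc, (commute_gH_aH.pow_right i).eq]
  rw [mul_assoc _ (gH k p), (semiconjBy_gH_bH.pow_right j).eq, ← mul_assoc, mul_assoc _ (gH k p),
    ← pow_succ']

variable (k p) in
def monomialSpan : Submodule k (H k p) :=
  Submodule.span k (Set.range fun ijl : ℕ × ℕ × ℕ => monomial k p ijl.1 ijl.2.1 ijl.2.2)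

theorem monomial_mem_monomialSpan (i j l : ℕ) : monomial k p i j l ∈ monomialSpan k p :=
  Submodule.subset_span ⟨(i, j, l), rfl⟩

theorem aH_mul_mem_monomialSpan {m : H k p} (hm : m ∈ monomialSpan k p) :
    aH k p * m ∈ monomialSpan k p := by
  refine Submodule.mul_mem_span_of_forall_mul_mem ?_ hm
  rintro _ ⟨⟨i, j, l⟩, rfl⟩
  rw [aH_mul_monomial]
  exact monomial_mem_monomialSpan _ _ _

theorem bH_mul_mem_monomialSpan {m : H k p} (hm : m ∈ monomialSpan k p) :
    bH k p * m ∈ monomialSpan k p := by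
  refine Submodule.mul_mem_span_of_forall_mul_mem ?_ hm
  rintro _ ⟨⟨i, j, l⟩, rfl⟩
  rw [bH_mul_monomial]
  exact Submodule.add_mem _ (monomial_mem_monomialSpan _ _ _)
    (Submodule.smul_mem _ _ (monomial_mem_monomialSpan _ _ _))

theorem gH_mul_mem_monomialSpan {m : H k p} (hm : m ∈ monomialSpan k p) :
    gH k p * m ∈ monomialSpan k p := by
  refine Submodule.mul_mem_span_of_forall_mul_mem ?_ hm
  rintro _ ⟨⟨i, j, l⟩, rfl⟩
  rw [gH_mul_monomial]
  refine Submodule.mul_mem_of_mem_adjoin (s := {aH k p, bH k p}) ?_ ?_ (monomial_mem_monomialSpan _ _ _)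
  · rintro x (rfl | rfl) m hm
    exacts [aH_mul_mem_monomialSpan hm, bH_mul_mem_monomialSpan hm]
  · have ha : aH k p ∈ Algebra.adjoin k {aH k p, bH k p} := Algebra.subset_adjoin (by simp)
    have hb : bH k p ∈ Algebra.adjoin k {aH k p, bH k p} := Algebra.subset_adjoin (by simp)
    exact Subalgebra.mul_mem _ (Subalgebra.pow_mem _ ha _)
      (Subalgebra.pow_mem _ (Subalgebra.sub_mem _ hb ha) _)

theorem monomialSpan_eq_top : monomialSpan k p = ⊤ := by
  refine Submodule.eq_top_of_one_mem_of_mul_mem adjoin_aH_bH_gH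
    (by simpa [monomial] using monomial_mem_monomialSpan (k := k) (p := p) 0 0 0) ?_
  rintro x (rfl | rfl | rfl) m hm
  exacts [aH_mul_mem_monomialSpan hm, bH_mul_mem_monomialSpan hm, gH_mul_mem_monomialSpan hm]

theorem monomial_mem_span (i j l : ℕ) :
    monomial k p i j l ∈
      Submodule.span k
        (Set.range fun ijl : Fin p × Fin p × Fin p => monomial k p ijl.1 ijl.2.1 ijl.2.2) := by
  rcases lt_or_ge i p with hi | hi
  · rcases lt_or_ge j p with hj | hj
    · have hl : l % p < p := Nat.mod_lt l (by omega)
      rw [monomial, pow_eq_pow_mod l gH_pow_eq_one]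
      exact Submodule.subset_span ⟨(⟨i, hi⟩, ⟨j, hj⟩, ⟨l % p, hl⟩), rfl⟩
    · simp [monomial, pow_eq_zero_of_le hj bH_pow_eq_zero]
  · simp [monomial, pow_eq_zero_of_le hi aH_pow_eq_zero]

end H

namespace HModel

variable (p : ℕ)

def opA : Module.End k (ℤ × ℤ × ZMod p → k) :=
  weightedShift (fun x => if 0 < x.1 ∧ x.1 < p then 1 else 0) (1, 0, 0)

def opT : Module.End k (ℤ × ℤ × ZMod p → k) :=
  weightedShift (fun x => if 0 < x.2.1 ∧ x.2.1 < p then 1 else 0) (0, 1, 0)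

def opG : Module.End k (ℤ × ℤ × ZMod p → k) := weightedShift 1 (0, 0, 1)

variable {k p}

theorem opG_mul_opA : opG k p * opA k p = opA k p * opG k p := by
  ext f ⟨i, j, l⟩
  simp [opA, opG, weightedShift_apply, Prod.mk_sub_mk]

theorem opG_pow : opG k p ^ p = 1 := by
  ext f x
  simp [opG, weightedShift_pow_apply, Prod.mk_zero_zero]

theorem opA_pow (hp : 0 < p) : opA k p ^ p = 0 :=
  weightedShift_pow_eq_zero (AddMonoidHom.fst ℤ (ℤ × ZMod p)) rfl hp fun _ h => if_neg h

theorem opT_pow (hp : 0 < p) : opT k p ^ p = 0 :=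
  weightedShift_pow_eq_zero ((AddMonoidHom.fst ℤ (ZMod p)).comp (AddMonoidHom.snd ℤ _)) rfl hp
    fun _ h => if_neg h

theorem opG_pow_single (l : ℕ) :
    (opG k p ^ l) (Pi.single 0 1) = Pi.single (0, 0, (l : ZMod p)) 1 := by
  ext x
  simp [opG, weightedShift_pow_apply, Pi.single_apply, sub_eq_zero]

theorem opA_pow_apply_ne_zero {i : ℕ} {f : ℤ × ℤ × ZMod p → k} {a j : ℤ} {l : ZMod p}
    (h : (opA k p ^ i) f (a, j, l) ≠ 0) : f (a - i, j, l) ≠ 0 := by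
  rw [opA, weightedShift_pow_apply] at h
  simpa [Prod.smul_mk, Prod.mk_sub_mk] using right_ne_zero_of_mul h

theorem opA_pow_apply_of_lt {i : ℕ} (hi : i < p) (f : ℤ × ℤ × ZMod p → k) (j : ℤ)
    (l : ZMod p) :
    (opA k p ^ i) f (i, j, l) = f (0, j, l) := by
  rw [opA, weightedShift_pow_apply, Finset.prod_eq_one, one_mul]
  · simp [Prod.smul_mk]
  · intro m hm
    rw [Finset.mem_range] at hm
    simp only [Prod.smul_mk, Prod.mk_sub_mk, nsmul_eq_mul, mul_one]
    rw [if_pos (by omega)]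

section CharP

variable [CharP k p]

variable (k p) in
def opS : Module.End k (ℤ × ℤ × ZMod p → k) :=
  weightedShift (fun x => if 0 < x.1 ∧ x.1 < p then
    ((x.1 : k) - 1) * 2⁻¹ + ZMod.castHom dvd_rfl k x.2.2 else 0) (1, 0, 0)

variable (k p) in
def opB : Module.End k (ℤ × ℤ × ZMod p → k) := opS k p + opT k p

theorem opB_apply (f : ℤ × ℤ × ZMod p → k) (x : ℤ × ℤ × ZMod p) :
    opB k p f x = opS k p f x + opT k p f x := rfl

theorem opB_mul_opA : opB k p * opA k p = opA k p * opB k p + (2 : k)⁻¹ • opA k p ^ 2 := by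
  ext f ⟨i, j, l⟩
  simp only [opA, opB, opS, opT, weightedShift_apply, Module.End.mul_apply, LinearMap.add_apply,
    LinearMap.smul_apply, pow_two, Pi.add_apply, Pi.smul_apply, smul_eq_mul, Prod.mk_sub_mk,
    sub_zero]
  split_ifs <;> push_cast <;> ring

theorem opG_mul_opB : opG k p * opB k p = opB k p * opG k p - opA k p * opG k p := by
  ext f ⟨i, j, l⟩
  simp only [opA, opB, opS, opT, opG, weightedShift_apply, Module.End.mul_apply,
    LinearMap.add_apply, LinearMap.sub_apply, Pi.add_apply, Pi.sub_apply, Pi.one_apply, one_mul,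
    Prod.mk_sub_mk, sub_zero, map_sub, map_one]
  split_ifs <;> ring

theorem opS_pow (hp : 0 < p) : opS k p ^ p = 0 :=
  weightedShift_pow_eq_zero (AddMonoidHom.fst ℤ (ℤ × ZMod p)) rfl hp fun _ h => if_neg h

theorem commute_opS_opT : Commute (opS k p) (opT k p) := by
  ext f ⟨i, j, l⟩
  simp only [opS, opT, weightedShift_apply, Module.End.mul_apply, Prod.mk_sub_mk, sub_zero]
  split_ifs <;> ring

theorem opB_pow [Fact p.Prime] : opB k p ^ p = 0 := by
  have : CharP (Module.End k (ℤ × ℤ × ZMod p → k)) p := charP_of_injective_algebraMap' k p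
  have hp := (Fact.out : p.Prime).pos
  rw [opB, add_pow_char_of_commute p commute_opS_opT, opS_pow hp, opT_pow hp, add_zero]

theorem opB_pow_apply_ne_zero {j : ℕ} {l : ZMod p} {a b : ℤ} {c : ZMod p}
    (h : (opB k p ^ j) (Pi.single (0, 0, l) 1) (a, b, c) ≠ 0) :
    c = l ∧ 0 ≤ a ∧ a + b = j := by
  induction j generalizing a b with
  | zero =>
    obtain ⟨rfl, rfl, rfl⟩ : a = 0 ∧ b = 0 ∧ c = l := by
      by_contra hx
      simp_all
    simp
  | succ j ih =>
    rw [pow_succ', Module.End.mul_apply, opB_apply, opS, opT, weightedShift_apply,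
      weightedShift_apply] at h
    simp only [Prod.mk_sub_mk, sub_zero] at h
    by_cases hS : (opB k p ^ j) (Pi.single (0, 0, l) 1) (a - 1, b, c) = 0
    · rw [hS, mul_zero, zero_add] at h
      obtain ⟨hc, ha, hab⟩ := ih (right_ne_zero_of_mul h)
      exact ⟨hc, ha, by push_cast; linarith⟩
    · obtain ⟨hc, ha, hab⟩ := ih hS
      exact ⟨hc, by linarith, by push_cast; linarith⟩

theorem opB_pow_apply_of_lt {j : ℕ} (hj : j < p) (l : ZMod p) :
    (opB k p ^ j) (Pi.single (0, 0, l) 1) (0, j, l) = 1 := by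
  induction j with
  | zero => simp
  | succ j ih =>
    rw [pow_succ', Module.End.mul_apply, opB_apply, opS, opT, weightedShift_apply,
      weightedShift_apply, if_neg (by simp), if_pos (by push_cast; omega)]
    simpa [Prod.mk_sub_mk] using ih (by omega)

variable [Fact p.Prime]

variable (k p) in
def rep : H k p →ₐ[k] Module.End k (ℤ × ℤ × ZMod p → k) :=
  RingQuot.liftAlgHom k ⟨FreeAlgebra.lift k ![opA k p, opB k p, opG k p], fun {x y} r => by
    induction r <;> simp [aF, bF, gF, opA_pow (Fact.out : p.Prime).pos, opB_pow, opG_pow,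
      opB_mul_opA, opG_mul_opA, opG_mul_opB]⟩

theorem rep_monomial (i j l : ℕ) :
    rep k p (H.monomial k p i j l) = opA k p ^ i * opB k p ^ j * opG k p ^ l := by
  simp [rep, H.monomial, aH, bH, gH, aF, bF, gF]

theorem linearIndependent_rep_monomial :
    LinearIndependent k fun t : Fin p × Fin p × Fin p =>
      rep k p (H.monomial k p t.1 t.2.1 t.2.2) (Pi.single 0 1) := by
  refine linearIndependent_of_triangular
    (fun t => ((t.1 : ℤ), (t.2.1 : ℤ), ((t.2.2 : ℕ) : ZMod p))) (fun t => t.1)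
    (fun t => ?_) (fun s t h => ?_)
  · rw [rep_monomial, Module.End.mul_apply, Module.End.mul_apply, opG_pow_single,
      opA_pow_apply_of_lt t.1.isLt, opB_pow_apply_of_lt t.2.1.isLt]
  · rw [rep_monomial, Module.End.mul_apply, Module.End.mul_apply, opG_pow_single] at h
    obtain ⟨hl, hi, hj⟩ := opB_pow_apply_ne_zero (opA_pow_apply_ne_zero h)
    have hl' : s.2.2 = t.2.2 := by
      rw [ZMod.natCast_eq_natCast_iff', Nat.mod_eq_of_lt s.2.2.isLt,
        Nat.mod_eq_of_lt t.2.2.isLt] at hl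
      exact Fin.ext hl.symm
    rcases lt_or_ge (s.1 : ℕ) t.1 with hlt | hge
    · exact Or.inr hlt
    · have hi' : (s.1 : ℕ) = t.1 := by omega
      exact Or.inl (Prod.ext (Fin.ext hi') (Prod.ext (Fin.ext (by omega)) hl'))

end CharP

end HModel

/-- The monomials `a^i b^j g^l`, `0 ≤ i,j,l ≤ p−1`, form a `k`-vector
space basis of `H`; in particular `H` is finite dimensional with `dim_k H = p³`. -/
theorem monomials_basis_of_H (p : ℕ) [CharP k p] (hp : 2 < p) :
    (∃ 𝒷 : Module.Basis (Fin p × Fin p × Fin p) k (H k p),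
      ∀ ijl : Fin p × Fin p × Fin p,
        𝒷 ijl = aH k p ^ (ijl.1 : ℕ) * bH k p ^ (ijl.2.1 : ℕ) * gH k p ^ (ijl.2.2 : ℕ)) ∧
    Module.Finite k (H k p) ∧ Module.finrank k (H k p) = p ^ 3 := by
  have : Fact p.Prime := ⟨(CharP.char_is_prime_or_zero k p).resolve_right (by omega)⟩
  have hli :
      LinearIndependent k fun t : Fin p × Fin p × Fin p => H.monomial k p t.1 t.2.1 t.2.2 :=
    .of_comp ((LinearMap.applyₗ (Pi.single 0 1)).comp (HModel.rep k p).toLinearMap)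
      HModel.linearIndependent_rep_monomial
  have hsp : ⊤ ≤ Submodule.span k
      (Set.range fun t : Fin p × Fin p × Fin p => H.monomial k p t.1 t.2.1 t.2.2) := by
    rw [← H.monomialSpan_eq_top, H.monomialSpan, Submodule.span_le]
    rintro _ ⟨⟨i, j, l⟩, rfl⟩
    exact H.monomial_mem_span i j l
  let 𝒷 := Module.Basis.mk hli hsp
  refine ⟨⟨𝒷, Module.Basis.mk_apply hli hsp⟩, .of_basis 𝒷, ?_⟩
  rw [Module.finrank_eq_card_basis 𝒷, Fintype.card_prod, Fintype.card_prod, Fintype.card_fin]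
  ring
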